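/- An ω-translation realised by an interactive i/o transition system whose transition relation is computable is limit-continuous: there exists a computable monotonic total function g : Σ* → Σ* such that for every strictly increasing chain u₁ ≺ u₂ ≺ ⋯ of finite words, φ(lim uₜ) = lim g(uₜ). -/

import Mathlib

/-!
Unambiguity and totality make the run of `T` on a finite word unique, and `g u` is the output
along the run on `u`, which grows with `u`. Each macro step (an input transition followed by the
transition out of the state reached) is the unique triple accepted by the decidable transition
relation, so it is found by unbounded search, and `g` is computable. For an infinite input `x`
the runs on the prefixes of `x` glue to an infinite path reading `x`, whose outputs spell `φ x`
by realisation; the output of `g` on the first `n` letters of `x` is the output up to position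
`2n` of that path, hence a prefix of `φ x`, and these prefixes exhaust `φ x`.
-/

/-- Visible labels: input actions `?b` and output actions `!b`; τ is `none`. -/
inductive IOLabel where
  | inp : Bool → IOLabel
  | out : Bool → IOLabel
deriving DecidableEq

/-- Encode `IOLabel` as `Bool × Bool` to obtain a `Primcodable` instance. -/
def IOLabel.equivBoolProd : IOLabel ≃ Bool × Bool where
  toFun a := match a with | .inp b => (false, b) | .out b => (true, b)
  invFun p := if p.1 then .out p.2 else .inp p.2
  left_inv := by rintro (b | b) <;> simp
  right_inv := by rintro ⟨(_ | _), b⟩ <;> simp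

instance : Primcodable IOLabel := Primcodable.ofEquiv _ IOLabel.equivBoolProd

/-- An i/o transition system with an effective (countable) state space `ℕ`. -/
structure IOTS where
  tr : ℕ → Option IOLabel → ℕ → Prop
  init : ℕ
  I : ℕ → Prop
  init_mem : I init
  alt_I : ∀ s a t, I s → tr s a t → (∃ b, a = some (IOLabel.inp b)) ∧ ¬ I t
  alt_E : ∀ s a t, ¬ I s → tr s a t → (a = none ∨ ∃ b, a = some (IOLabel.out b)) ∧ I t
  unamb : ∀ s, ¬ I s → ∃! p : Option IOLabel × ℕ, tr s p.1 p.2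
  total : ∀ s, I s → ∀ b : Bool, ∃! t, tr s (some (IOLabel.inp b)) t

namespace IOTS

def InfPath (T : IOTS) (p : ℕ → ℕ) (l : ℕ → Option IOLabel) : Prop :=
  ∀ n, T.tr (p n) (l n) (p (n + 1))

def SpellsInput (l : ℕ → Option IOLabel) (x : ℕ → Bool) : Prop :=
  ∃ φ : ℕ → ℕ, StrictMono φ ∧ (∀ n, l (φ n) = some (IOLabel.inp (x n))) ∧
    ∀ m b, l m = some (IOLabel.inp b) → ∃ n, φ n = m

def SpellsOutput (l : ℕ → Option IOLabel) (y : ℕ → Bool) : Prop :=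
  ∃ φ : ℕ → ℕ, StrictMono φ ∧ (∀ n, l (φ n) = some (IOLabel.out (y n))) ∧
    ∀ m b, l m = some (IOLabel.out b) → ∃ n, φ n = m

def Interactive (T : IOTS) : Prop :=
  ∀ s (b : Bool) s₀, T.tr s (some (IOLabel.inp b)) s₀ →
    ∀ (p : ℕ → ℕ) (l : ℕ → Option IOLabel), p 0 = s₀ →
      (∀ n, T.tr (p n) (l n) (p (n + 1))) → ∃ j b', l j = some (IOLabel.out b')

def Realises (T : IOTS) (φ : (ℕ → Bool) → (ℕ → Bool)) : Prop :=
  ∀ x : ℕ → Bool,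
    (∃ p l, p 0 = T.init ∧ InfPath T p l ∧ SpellsInput l x) ∧
    (∀ p l, p 0 = T.init → InfPath T p l → SpellsInput l x → SpellsOutput l (φ x))

end IOTS

def SPrefix (u v : List Bool) : Prop := u <+: v ∧ u ≠ v

def StreamPrefix (u : List Bool) (x : ℕ → Bool) : Prop :=
  ∀ i (h : i < u.length), u[i] = x i

open Encodable

section Search

variable {α β : Type*} [Primcodable α] [Primcodable β]

def findUnique (p : β → Bool) : Part β :=
  Nat.rfindOpt fun n => (decode n : Option β).filter p

theorem mem_findUnique {p : β → Bool} {b : β} (hb : p b) (huniq : ∀ c, p c → c = b) :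
    b ∈ findUnique p := by
  have hdom : (findUnique p).Dom :=
    Nat.rfindOpt_dom.2 ⟨encode b, b, by simp [encodek, hb]⟩
  obtain ⟨n, hn⟩ := Nat.rfindOpt_spec (Part.get_mem hdom)
  obtain ⟨-, hc⟩ := Option.mem_filter_iff.1 hn
  simpa [huniq _ hc] using Part.get_mem hdom

theorem Partrec.findUnique {p : α → β → Bool} (hp : Computable₂ p) :
    Partrec fun a => findUnique (p a) := by
  have hfilter : Computable₂ fun (a : α) (n : ℕ) => (decode n : Option β).filter (p a) :=
    (Computable.option_bind (Computable.decode.comp Computable.snd)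
      (Computable.cond (hp.comp (Computable.fst.comp Computable.fst) Computable.snd)
        (Computable.option_some.comp Computable.snd) (Computable.const Option.none)).to₂).of_eq
      fun q => by dsimp only; cases (decode q.2 : Option β) <;> simp [Option.filter, Bool.cond_eq_ite]
  exact Partrec.rfindOpt hfilter

end Search

theorem exists_filterMap_range_eq {β : Type*} {Ω : ℕ → Option β} {y : ℕ → β} {ψ : ℕ → ℕ}
    (hψ : StrictMono ψ) (hval : ∀ i, Ω (ψ i) = some (y i))
    (hsurj : ∀ n c, Ω n = some c → ∃ i, ψ i = n) (N : ℕ) :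
    ∃ k, (List.range N).filterMap Ω = (List.range k).map y ∧ ∀ i, ψ i < N ↔ i < k := by
  induction N with
  | zero => exact ⟨0, rfl, by simp⟩
  | succ N ih =>
    obtain ⟨k, hk, hψk⟩ := ih
    rw [List.range_succ, List.filterMap_append, hk]
    cases hN : Ω N with
    | none =>
      have hne : ∀ i, ψ i ≠ N := fun i h => by simp [← h, hval] at hN
      refine ⟨k, by simp [hN], fun i => ?_⟩
      rw [← hψk]
      have := hne i
      omega
    | some c =>
      obtain ⟨j, rfl⟩ := hsurj _ c hN
      have hjk : j = k := by
        rcases lt_trichotomy j k with h | h | h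
        · exact absurd ((hψk j).2 h) (lt_irrefl _)
        · exact h
        · exact absurd ((hψk k).1 (hψ h)) (lt_irrefl _)
      subst hjk
      have hc : c = y j := Option.some.inj (hN.symm.trans (hval j))
      refine ⟨j + 1, by simp [List.range_succ, hN, hc], fun i => ?_⟩
      rw [Nat.lt_succ_iff_lt_or_eq, Nat.lt_succ_iff_lt_or_eq, hψk, hψ.injective.eq_iff]

theorem StreamPrefix.eq_map_range {u : List Bool} {x : ℕ → Bool} (h : StreamPrefix u x) :
    u = (List.range u.length).map x :=
  List.ext_getElem (by simp) fun i hi _ => by simp [h i hi]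

theorem streamPrefix_map_range (y : ℕ → Bool) (k : ℕ) :
    StreamPrefix ((List.range k).map y) y := by
  intro i hi
  simp

theorem le_length_of_sPrefix_chain {u : ℕ → List Bool} (hu : ∀ k, SPrefix (u k) (u (k + 1)))
    (k : ℕ) : k ≤ (u k).length := by
  have hlt : ∀ k, (u k).length < (u (k + 1)).length := fun k =>
    lt_of_le_of_ne (hu k).1.length_le fun h => (hu k).2 ((hu k).1.eq_of_length h)
  exact (strictMono_nat_of_lt_succ hlt).le_apply

namespace IOTS

def outBit : Option IOLabel → Option Bool
  | some (.out c) => some c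
  | _ => none

@[simp] theorem outBit_inp (b : Bool) : outBit (some (.inp b)) = none := rfl

theorem outBit_eq_some {a : Option IOLabel} {c : Bool} :
    outBit a = some c ↔ a = some (.out c) := by
  rcases a with _ | (b | b) <;> simp [outBit]

section Output

variable {l : ℕ → Option IOLabel} {y : ℕ → Bool}

theorem SpellsOutput.exists_filterMap_range_eq (h : SpellsOutput l y) :
    ∃ ψ : ℕ → ℕ, ∀ N, ∃ k, (List.range N).filterMap (fun m => outBit (l m)) =
      (List.range k).map y ∧ ∀ i, ψ i < N ↔ i < k := by
  obtain ⟨ψ, hψ, hval, hsurj⟩ := h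
  exact ⟨ψ, _root_.exists_filterMap_range_eq hψ (fun i => by simp [hval, outBit])
    fun n c hc => hsurj n c (outBit_eq_some.1 hc)⟩

theorem SpellsOutput.streamPrefix_filterMap_range (h : SpellsOutput l y) (N : ℕ) :
    StreamPrefix ((List.range N).filterMap fun m => outBit (l m)) y := by
  obtain ⟨_, hψ⟩ := h.exists_filterMap_range_eq
  obtain ⟨k, hk, -⟩ := hψ N
  exact hk ▸ streamPrefix_map_range y k

theorem SpellsOutput.exists_le_length_filterMap_range (h : SpellsOutput l y) (n : ℕ) :
    ∃ N₀, ∀ N, N₀ ≤ N → n ≤ ((List.range N).filterMap fun m => outBit (l m)).length := by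
  obtain ⟨ψ, hψ⟩ := h.exists_filterMap_range_eq
  refine ⟨ψ n + 1, fun N hN => ?_⟩
  obtain ⟨k, hk, hlt⟩ := hψ N
  rw [hk, List.length_map, List.length_range]
  exact ((hlt n).1 (by omega)).le

end Output

variable (T : IOTS)

def IsMacroStep (s : ℕ) (b : Bool) (q : ℕ × Option IOLabel × ℕ) : Prop :=
  T.tr s (some (.inp b)) q.1 ∧ T.tr q.1 q.2.1 q.2.2

theorem existsUnique_isMacroStep {s : ℕ} (hs : T.I s) (b : Bool) :
    ∃! q, T.IsMacroStep s b q := by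
  obtain ⟨t, ht, ht_uniq⟩ := T.total s hs b
  obtain ⟨p, hp, hp_uniq⟩ := T.unamb t (T.alt_I _ _ _ hs ht).2
  refine ⟨(t, p), ⟨ht, hp⟩, fun q ⟨hq₁, hq₂⟩ => ?_⟩
  obtain rfl := ht_uniq _ hq₁
  rw [← hp_uniq _ hq₂]

open Classical in
noncomputable def macroStep (s : ℕ) (b : Bool) : ℕ × Option IOLabel × ℕ :=
  if h : ∃! q, T.IsMacroStep s b q then h.choose else (0, none, 0)

variable {T}

theorem isMacroStep_macroStep {s : ℕ} (hs : T.I s) (b : Bool) :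
    T.IsMacroStep s b (T.macroStep s b) := by
  have h := T.existsUnique_isMacroStep hs b
  rw [macroStep, dif_pos h]
  exact h.choose_spec.1

theorem IsMacroStep.eq_macroStep {s : ℕ} {b : Bool} {q : ℕ × Option IOLabel × ℕ}
    (hs : T.I s) (hq : T.IsMacroStep s b q) : q = T.macroStep s b :=
  (T.existsUnique_isMacroStep hs b).unique hq (isMacroStep_macroStep hs b)

theorem I_macroStep {s : ℕ} (hs : T.I s) (b : Bool) : T.I (T.macroStep s b).2.2 := by
  obtain ⟨h₁, h₂⟩ := isMacroStep_macroStep hs b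
  exact (T.alt_E _ _ _ (T.alt_I _ _ _ hs h₁).2 h₂).2

theorem macroStep_label_ne_inp {s : ℕ} (hs : T.I s) (b c : Bool) :
    (T.macroStep s b).2.1 ≠ some (.inp c) := by
  obtain ⟨h₁, h₂⟩ := isMacroStep_macroStep hs b
  rcases (T.alt_E _ _ _ (T.alt_I _ _ _ hs h₁).2 h₂).1 with h | ⟨d, h⟩ <;> simp [h]

variable (T)

def advance (p : ℕ × List Bool) (q : ℕ × Option IOLabel × ℕ) : ℕ × List Bool :=
  (q.2.2, p.2 ++ (outBit q.2.1).toList)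

noncomputable def runStep (p : ℕ × List Bool) (b : Bool) : ℕ × List Bool :=
  advance p (T.macroStep p.1 b)

noncomputable def run (u : List Bool) : ℕ × List Bool :=
  u.foldl T.runStep (T.init, [])

theorem run_append (u v : List Bool) : T.run (u ++ v) = v.foldl T.runStep (T.run u) :=
  List.foldl_append ..

theorem run_concat (u : List Bool) (b : Bool) : T.run (u ++ [b]) = T.runStep (T.run u) b := by
  rw [run_append, List.foldl_cons, List.foldl_nil]

theorem I_run (u : List Bool) : T.I (T.run u).1 := by
  induction u using List.reverseRecOn with
  | nil => exact T.init_mem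
  | append_singleton u b ih => rw [run_concat]; exact I_macroStep ih b

theorem snd_prefix_foldl_runStep (v : List Bool) (p : ℕ × List Bool) :
    p.2 <+: (v.foldl T.runStep p).2 := by
  induction v generalizing p with
  | nil => exact List.prefix_refl _
  | cons b v ih => exact (List.prefix_append _ _).trans (ih (T.runStep p b))

theorem run_snd_prefix {u v : List Bool} (h : u <+: v) : (T.run u).2 <+: (T.run v).2 := by
  obtain ⟨w, rfl⟩ := h
  rw [run_append]
  exact T.snd_prefix_foldl_runStep w _

variable (x : ℕ → Bool)

noncomputable def stateAt (n : ℕ) : ℕ := (T.run ((List.range n).map x)).1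

noncomputable def macroAt (n : ℕ) : ℕ × Option IOLabel × ℕ := T.macroStep (T.stateAt x n) (x n)

noncomputable def pathState (m : ℕ) : ℕ :=
  if m % 2 = 0 then T.stateAt x (m / 2) else (T.macroAt x (m / 2)).1

noncomputable def pathLabel (m : ℕ) : Option IOLabel :=
  if m % 2 = 0 then some (.inp (x (m / 2))) else (T.macroAt x (m / 2)).2.1

theorem I_stateAt (n : ℕ) : T.I (T.stateAt x n) := T.I_run _

theorem isMacroStep_macroAt (n : ℕ) : T.IsMacroStep (T.stateAt x n) (x n) (T.macroAt x n) :=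
  isMacroStep_macroStep (T.I_stateAt x n) (x n)

theorem run_range_succ (n : ℕ) :
    T.run ((List.range (n + 1)).map x) = T.runStep (T.run ((List.range n).map x)) (x n) := by
  rw [List.range_succ, List.map_append, List.map_singleton, run_concat]

theorem stateAt_succ (n : ℕ) : T.stateAt x (n + 1) = (T.macroAt x n).2.2 := by
  rw [stateAt, run_range_succ]; rfl

@[simp] theorem pathState_two_mul (n : ℕ) : T.pathState x (2 * n) = T.stateAt x n := by
  simp [pathState]

@[simp] theorem pathState_two_mul_add_one (n : ℕ) :
    T.pathState x (2 * n + 1) = (T.macroAt x n).1 := by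
  rw [pathState, if_neg (by omega), show (2 * n + 1) / 2 = n by omega]

@[simp] theorem pathLabel_two_mul (n : ℕ) : T.pathLabel x (2 * n) = some (.inp (x n)) := by
  simp [pathLabel]

@[simp] theorem pathLabel_two_mul_add_one (n : ℕ) :
    T.pathLabel x (2 * n + 1) = (T.macroAt x n).2.1 := by
  rw [pathLabel, if_neg (by omega), show (2 * n + 1) / 2 = n by omega]

theorem pathState_zero : T.pathState x 0 = T.init := by
  simpa [stateAt, run] using T.pathState_two_mul x 0

theorem infPath_path : InfPath T (T.pathState x) (T.pathLabel x) := by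
  intro m
  obtain ⟨n, rfl | rfl⟩ := Nat.even_or_odd' m
  · simpa using (T.isMacroStep_macroAt x n).1
  · simpa [show 2 * n + 1 + 1 = 2 * (n + 1) by ring, stateAt_succ]
      using (T.isMacroStep_macroAt x n).2

theorem spellsInput_path : SpellsInput (T.pathLabel x) x := by
  refine ⟨(2 * ·), fun a b h => by simpa using h, by simp, fun m b hm => ?_⟩
  obtain ⟨n, rfl | rfl⟩ := Nat.even_or_odd' m
  · exact ⟨n, rfl⟩
  · simp only [pathLabel_two_mul_add_one] at hm
    exact absurd hm (macroStep_label_ne_inp (T.I_stateAt x n) _ _)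

theorem run_range_snd (N : ℕ) :
    (T.run ((List.range N).map x)).2 =
      (List.range (2 * N)).filterMap fun m => outBit (T.pathLabel x m) := by
  induction N with
  | zero => rfl
  | succ N ih =>
    rw [run_range_succ, show 2 * (N + 1) = 2 * N + 1 + 1 by ring, List.range_succ,
      List.range_succ, List.filterMap_append, List.filterMap_append, ← ih]
    simp only [runStep, advance, List.filterMap_cons, List.filterMap_nil, pathLabel_two_mul,
      pathLabel_two_mul_add_one, outBit_inp, macroAt, stateAt]
    cases outBit _ <;> simp

theorem run_snd_of_streamPrefix {u : List Bool} (h : StreamPrefix u x) :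
    (T.run u).2 = (List.range (2 * u.length)).filterMap fun m => outBit (T.pathLabel x m) := by
  conv_lhs => rw [h.eq_map_range]
  exact T.run_range_snd x u.length

end IOTS

namespace IOTS

theorem primrec_inp : Primrec IOLabel.inp :=
  (Primrec.of_equiv_symm.comp ((Primrec.const false).pair Primrec.id)).of_eq fun b => by
    simp [IOLabel.equivBoolProd]

theorem primrec_outBit : Primrec outBit := by
  let e := IOLabel.equivBoolProd
  have h : Primrec fun a : Option IOLabel => a.bind fun l => cond (e l).1 (some (e l).2) none :=
    Primrec.option_bind Primrec.id <| Primrec.cond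
      (Primrec.fst.comp (Primrec.of_equiv.comp Primrec.snd))
      (Primrec.option_some.comp (Primrec.snd.comp (Primrec.of_equiv.comp Primrec.snd)))
      (Primrec.const none)
  exact h.of_eq fun a => by rcases a with _ | (b | b) <;> rfl

theorem computable₂_advance : Computable₂ advance :=
  Primrec₂.to_comp <| (Primrec.snd.comp (Primrec.snd.comp Primrec.snd)).pair
    (Primrec.list_append.comp (Primrec.snd.comp Primrec.fst)
      (Primrec.optionToList.comp
        (primrec_outBit.comp (Primrec.fst.comp (Primrec.snd.comp Primrec.snd)))))

variable {T : IOTS} {f : ℕ × Option IOLabel × ℕ → Bool}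

def macroSearch (f : ℕ × Option IOLabel × ℕ → Bool) (q : ℕ × Bool) :
    Part (ℕ × Option IOLabel × ℕ) :=
  findUnique fun r => f (q.1, some (.inp q.2), r.1) && f r

theorem partrec_macroSearch (hf : Computable f) : Partrec (macroSearch f) :=
  Partrec.findUnique <| Primrec.and.to_comp.comp
    (hf.comp <| (Computable.fst.comp Computable.fst).pair <|
      ((Primrec.option_some.comp primrec_inp).to_comp.comp
        (Computable.snd.comp Computable.fst)).pair (Computable.fst.comp Computable.snd))
    (hf.comp Computable.snd)

theorem macroStep_mem_macroSearch (hfT : ∀ s a t, T.tr s a t ↔ f (s, a, t) = true) {s : ℕ}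
    (hs : T.I s) (b : Bool) : T.macroStep s b ∈ macroSearch f (s, b) := by
  have key : ∀ r, (f (s, some (.inp b), r.1) && f r) = true ↔ T.IsMacroStep s b r := by
    simp [IsMacroStep, hfT]
  exact mem_findUnique ((key _).2 (isMacroStep_macroStep hs b))
    fun r hr => ((key r).1 hr).eq_macroStep hs

/-- Written as a recursion on `k`, rather than a fold over `u`, so that `Partrec.nat_rec`
applies. -/
def runSearch (f : ℕ × Option IOLabel × ℕ → Bool) (i₀ : ℕ) (u : List Bool) (k : ℕ) :
    Part (ℕ × List Bool) :=
  k.rec (Part.some (i₀, [])) fun n P =>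
    P.bind fun p => (macroSearch f (p.1, u.getD n true)).map (advance p)

theorem run_take_mem_runSearch (hfT : ∀ s a t, T.tr s a t ↔ f (s, a, t) = true)
    (u : List Bool) (k : ℕ) (hk : k ≤ u.length) :
    T.run (u.take k) ∈ runSearch f T.init u k := by
  induction k with
  | zero => exact Part.mem_some _
  | succ k ih =>
    have hk' : k < u.length := hk
    rw [List.take_succ_eq_append_getElem hk', run_concat]
    refine Part.mem_bind_iff.2 ⟨_, ih hk'.le, Part.mem_map _ ?_⟩
    rw [List.getD_eq_getElem u true hk']
    exact macroStep_mem_macroSearch hfT (T.I_run _) _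

theorem partrec_runSearch (hf : Computable f) (i₀ : ℕ) :
    Partrec fun u => runSearch f i₀ u u.length :=
  Partrec.nat_rec Computable.list_length (Partrec.const' _) <|
    (Partrec.map ((partrec_macroSearch hf).comp <|
        (Computable.fst.comp (Computable.snd.comp Computable.snd)).pair <|
          (Primrec.list_getD true).to_comp.comp Computable.fst (Computable.fst.comp Computable.snd))
      (computable₂_advance.comp (Computable.snd.comp (Computable.snd.comp Computable.fst))
        Computable.snd).to₂).to₂

theorem computable_run_snd (hf : Computable f) (hfT : ∀ s a t, T.tr s a t ↔ f (s, a, t) = true) :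
    Computable fun u => (T.run u).2 :=
  Partrec.of_eq_tot ((partrec_runSearch hf T.init).map (Computable.snd.comp Computable.snd).to₂)
    fun u => by
      have h := run_take_mem_runSearch hfT u u.length le_rfl
      rw [List.take_length] at h
      exact Part.mem_map Prod.snd h

end IOTS

theorem stmt_11_general (T : IOTS)
    (f : ℕ × Option IOLabel × ℕ → Bool) (hf : Computable f)
    (hfT : ∀ s a t, T.tr s a t ↔ f (s, a, t) = true)
    (φ : (ℕ → Bool) → (ℕ → Bool)) (hφ : IOTS.Realises T φ) :
    ∃ g : List Bool → List Bool, Computable g ∧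
      (∀ u v, u <+: v → g u <+: g v) ∧
      ∀ u : ℕ → List Bool, (∀ k, SPrefix (u k) (u (k + 1))) →
        ∀ x : ℕ → Bool, (∀ k, StreamPrefix (u k) x) →
          (∀ k, StreamPrefix (g (u k)) (φ x)) ∧
          (∀ n, ∃ k, n ≤ (g (u k)).length) := by
  refine ⟨fun u => (T.run u).2, IOTS.computable_run_snd hf hfT, fun u v => T.run_snd_prefix,
    fun u hu x hx => ?_⟩
  beta_reduce
  have hout : IOTS.SpellsOutput (T.pathLabel x) (φ x) :=
    (hφ x).2 _ _ (T.pathState_zero x) (T.infPath_path x) (T.spellsInput_path x)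
  refine ⟨fun k => ?_, fun n => ?_⟩
  · rw [T.run_snd_of_streamPrefix x (hx k)]
    exact hout.streamPrefix_filterMap_range _
  · obtain ⟨N₀, hN₀⟩ := hout.exists_le_length_filterMap_range n
    have hN₀_le : N₀ ≤ 2 * (u N₀).length := by
      have := le_length_of_sPrefix_chain hu N₀
      omega
    exact ⟨N₀, (T.run_snd_of_streamPrefix x (hx N₀)).symm ▸ hN₀ _ hN₀_le⟩

/-- An ω-translation realised by an interactive i/o transition system with a computable
transition relation is limit-continuous: there is a computable monotonic total function
`g : Σ* → Σ*` such that for every strictly increasing chain `u₁ ≺ u₂ ≺ ⋯`,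
`φ (lim uₜ) = lim (g (uₜ))`. -/
theorem stmt_11 (T : IOTS) (hint : IOTS.Interactive T)
    (f : ℕ × Option IOLabel × ℕ → Bool) (hf : Computable f)
    (hfT : ∀ s a t, T.tr s a t ↔ f (s, a, t) = true)
    (φ : (ℕ → Bool) → (ℕ → Bool)) (hφ : IOTS.Realises T φ) :
    ∃ g : List Bool → List Bool, Computable g ∧
      (∀ u v, u <+: v → g u <+: g v) ∧
      ∀ u : ℕ → List Bool, (∀ k, SPrefix (u k) (u (k + 1))) →
        ∀ x : ℕ → Bool, (∀ k, StreamPrefix (u k) x) →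
          (∀ k, StreamPrefix (g (u k)) (φ x)) ∧
          (∀ n, ∃ k, n ≤ (g (u k)).length) :=
  stmt_11_general T f hf hfT φ hφ
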